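/- Let g, h be Lie algebras with invariants t_g, t_h and let A be a (g⊕g⊕h)-quasi-Poisson algebra. Pull back the action along the Lie algebra morphism g⊕h → g⊕g⊕h, (u,v) ↦ (u,u,v), and define the fused bracket {a,b}' = {a,b} + (1/2) m(t^{2,3} · (a⊗b − b⊗a)), where t^{2,3} denotes t_g acting with one leg through the second copy of g on the first tensor factor and the other leg through the first copy of g on the second tensor factor. Then (A, m, {·,·}') is a (g⊕h)-quasi-Poisson algebra; i.e., the fused bracket is skew, a biderivation, (g⊕h)-invariant, and satisfies the Jacobi identity twisted by φ_{g⊕h} for the diagonal action. -/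

import Mathlib

open TensorProduct

/-- The product of two Lie rings is a Lie ring (componentwise bracket). -/
instance prodLieRing (L M : Type*) [LieRing L] [LieRing M] : LieRing (L × M) where
  bracket p q := (⁅p.1, q.1⁆, ⁅p.2, q.2⁆)
  add_lie x y z := by ext <;> exact add_lie _ _ _
  lie_add x y z := by ext <;> exact lie_add _ _ _
  lie_self x := by ext <;> exact lie_self _
  leibniz_lie x y z := by ext <;> exact leibniz_lie _ _ _

/-- The product of two Lie algebras is a Lie algebra. -/
instance prodLieAlgebra (R L M : Type*) [CommRing R] [LieRing L] [LieRing M]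
    [LieAlgebra R L] [LieAlgebra R M] : LieAlgebra R (L × M) where
  lie_smul t x y := by ext <;> exact lie_smul _ _ _

variable {k : Type*} [Field k] [CharZero k]

/-- Action of an element of `g ⊗ g` on `A ⊗ A` via two (possibly different) actions. -/
noncomputable def twoLegPair {g A : Type*} [AddCommGroup g] [Module k g] [CommRing A]
    [Algebra k A] (ρ₁ ρ₂ : g →ₗ[k] Module.End k A) :
    g ⊗[k] g →ₗ[k] Module.End k (A ⊗[k] A) :=
  TensorProduct.lift (((TensorProduct.mapBilinear (RingHom.id k) A A A A).comp ρ₁).compl₂ ρ₂)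

/-- The action of an element of `g ⊗ (g ⊗ g)` on `A ⊗ (A ⊗ A)` via the three legs. -/
noncomputable def threeLeg {g A : Type*} [AddCommGroup g] [Module k g] [CommRing A]
    [Algebra k A] (ρ : g →ₗ[k] Module.End k A) :
    g ⊗[k] (g ⊗[k] g) →ₗ[k] Module.End k (A ⊗[k] (A ⊗[k] A)) :=
  TensorProduct.lift
    (((TensorProduct.mapBilinear (RingHom.id k) A (A ⊗[k] A) A (A ⊗[k] A)).comp ρ).compl₂
      (twoLegPair ρ ρ))

/-- The triple product `m⁽³⁾ = m ∘ (1 ⊗ m) : A ⊗ (A ⊗ A) → A`. -/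
noncomputable def tripleMul (k : Type*) (A : Type*) [Field k] [CommRing A] [Algebra k A] :
    A ⊗[k] (A ⊗[k] A) →ₗ[k] A :=
  (LinearMap.mul' k A).comp (TensorProduct.map LinearMap.id (LinearMap.mul' k A))

/-- The element `[t¹², t²³] ∈ g ⊗ g ⊗ g`. -/
noncomputable def tCommutator (k : Type*) {g : Type*} [Field k] [LieRing g]
    [LieAlgebra k g] (t : g ⊗[k] g) : g ⊗[k] (g ⊗[k] g) :=
  (TensorProduct.map LinearMap.id
      (TensorProduct.map (TensorProduct.lift (LieAlgebra.ad k g)) LinearMap.id))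
    ((TensorProduct.map LinearMap.id ((TensorProduct.assoc k g g g).symm.toLinearMap))
      ((TensorProduct.assoc k g g (g ⊗[k] g)).toLinearMap (t ⊗ₜ[k] t)))

/-- The Cartan trivector `φ = (1/4)[t¹², t²³]`. -/
noncomputable def cartanPhi (k : Type*) {g : Type*} [Field k] [LieRing g]
    [LieAlgebra k g] (t : g ⊗[k] g) : g ⊗[k] (g ⊗[k] g) :=
  (4 : k)⁻¹ • tCommutator k t

section Fusion

variable (k) (g h : Type*) [LieRing g] [LieAlgebra k g] [LieRing h] [LieAlgebra k h]

/-- Inclusion of the first `g`-summand into `(g ⊕ g) ⊕ h`. -/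
noncomputable def incl1 : g →ₗ[k] (g × g) × h :=
  (LinearMap.inl k (g × g) h).comp (LinearMap.inl k g g)

/-- Inclusion of the second `g`-summand into `(g ⊕ g) ⊕ h`. -/
noncomputable def incl2 : g →ₗ[k] (g × g) × h :=
  (LinearMap.inl k (g × g) h).comp (LinearMap.inr k g g)

/-- Inclusion of the `h`-summand into `(g ⊕ g) ⊕ h`. -/
noncomputable def inclh : h →ₗ[k] (g × g) × h := LinearMap.inr k (g × g) h

/-- The diagonal morphism `g ⊕ h → g ⊕ g ⊕ h`, `(u,v) ↦ (u,u,v)`. -/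
noncomputable def diagMor : (g × h) →ₗ[k] (g × g) × h :=
  ((LinearMap.fst k g h).prod (LinearMap.fst k g h)).prod (LinearMap.snd k g h)

end Fusion

section MyHelp
variable {g A : Type*} [AddCommGroup g] [Module k g] [CommRing A] [Algebra k A]

@[simp] lemma twoLegPair_tmul (ρ₁ ρ₂ : g →ₗ[k] Module.End k A) (x y : g) (a b : A) :
    twoLegPair (k := k) ρ₁ ρ₂ (x ⊗ₜ[k] y) (a ⊗ₜ[k] b) = ρ₁ x a ⊗ₜ[k] ρ₂ y b := by
  simp [twoLegPair, TensorProduct.mapBilinear]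

@[simp] lemma tripleMul_tmul (a b c : A) :
    tripleMul k A (a ⊗ₜ[k] (b ⊗ₜ[k] c)) = a * (b * c) := by
  simp [tripleMul]

@[simp] lemma threeLeg_tmul (ρ : g →ₗ[k] Module.End k A) (x y z : g) (a b c : A) :
    threeLeg (k := k) ρ (x ⊗ₜ[k] (y ⊗ₜ[k] z)) (a ⊗ₜ[k] (b ⊗ₜ[k] c)) =
      ρ x a ⊗ₜ[k] (ρ y b ⊗ₜ[k] ρ z c) := by
  simp [threeLeg, TensorProduct.mapBilinear]

end MyHelp
set_option linter.unusedSectionVars false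
set_option maxHeartbeats 1000000

section MyComm
variable {G : Type*} [LieRing G] [LieAlgebra k G]

/-- Bilinear version of `tCommutator`. -/
noncomputable def tComm2 (s t : G ⊗[k] G) : G ⊗[k] (G ⊗[k] G) :=
  (TensorProduct.map LinearMap.id
      (TensorProduct.map (TensorProduct.lift (LieAlgebra.ad k G)) LinearMap.id))
    ((TensorProduct.map LinearMap.id ((TensorProduct.assoc k G G G).symm.toLinearMap))
      ((TensorProduct.assoc k G G (G ⊗[k] G)).toLinearMap (s ⊗ₜ[k] t)))

lemma tCommutator_eq_tComm2 (t : G ⊗[k] G) : tCommutator k t = tComm2 (k := k) t t := rfl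

lemma tComm2_tmul (x y z w : G) :
    tComm2 (k := k) (x ⊗ₜ[k] y) (z ⊗ₜ[k] w) = x ⊗ₜ[k] (⁅y, z⁆ ⊗ₜ[k] w) := by
  simp [tComm2]

lemma tComm2_sum_sum {ι κ : Type*} (s : Finset ι) (t : Finset κ)
    (f : ι → G ⊗[k] G) (e : κ → G ⊗[k] G) :
    tComm2 (k := k) (∑ i ∈ s, f i) (∑ j ∈ t, e j) =
      ∑ i ∈ s, ∑ j ∈ t, tComm2 (k := k) (f i) (e j) := by
  simp only [tComm2, TensorProduct.sum_tmul, TensorProduct.tmul_sum, map_sum]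
  exact Finset.sum_comm

lemma tComm2_add_add (s₁ s₂ t₁ t₂ : G ⊗[k] G) :
    tComm2 (k := k) (s₁ + s₂) (t₁ + t₂) =
      tComm2 (k := k) s₁ t₁ + tComm2 (k := k) s₁ t₂ +
        tComm2 (k := k) s₂ t₁ + tComm2 (k := k) s₂ t₂ := by
  simp only [tComm2, TensorProduct.add_tmul, TensorProduct.tmul_add, map_add]
  abel

end MyComm

section MyProd
variable {L M : Type*} [LieRing L] [LieRing M]

@[simp] lemma prod_lie_def (p q : L × M) : ⁅p, q⁆ = (⁅p.1, q.1⁆, ⁅p.2, q.2⁆) := rfl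

end MyProd

section MyIncl
variable (g h : Type*) [LieRing g] [LieAlgebra k g] [LieRing h] [LieAlgebra k h]

@[simp] lemma incl1_apply (x : g) : incl1 k g h x = ((x, 0), 0) := rfl
@[simp] lemma incl2_apply (x : g) : incl2 k g h x = ((0, x), 0) := rfl
@[simp] lemma inclh_apply (v : h) : inclh k g h v = ((0, 0), v) := rfl

variable {g h}

lemma lie_incl1 (x y : g) : ⁅incl1 k g h x, incl1 k g h y⁆ = incl1 k g h ⁅x, y⁆ := by
  simp [Prod.ext_iff]
lemma lie_incl2 (x y : g) : ⁅incl2 k g h x, incl2 k g h y⁆ = incl2 k g h ⁅x, y⁆ := by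
  simp [Prod.ext_iff]
lemma lie_inclh (x y : h) : ⁅inclh k g h x, inclh k g h y⁆ = inclh k g h ⁅x, y⁆ := by
  simp [Prod.ext_iff]
lemma lie_incl12 (x y : g) : ⁅incl1 k g h x, incl2 k g h y⁆ = 0 := by
  simp [Prod.ext_iff]
lemma lie_incl21 (x y : g) : ⁅incl2 k g h x, incl1 k g h y⁆ = 0 := by
  simp [Prod.ext_iff]
lemma lie_incl1h (x : g) (v : h) : ⁅incl1 k g h x, inclh k g h v⁆ = 0 := by
  simp [Prod.ext_iff]
lemma lie_inclh1 (v : h) (x : g) : ⁅inclh k g h v, incl1 k g h x⁆ = 0 := by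
  simp [Prod.ext_iff]
lemma lie_incl2h (x : g) (v : h) : ⁅incl2 k g h x, inclh k g h v⁆ = 0 := by
  simp [Prod.ext_iff]
lemma lie_inclh2 (v : h) (x : g) : ⁅inclh k g h v, incl2 k g h x⁆ = 0 := by
  simp [Prod.ext_iff]

lemma diagMor_inl (x : g) :
    diagMor k g h (LinearMap.inl k g h x) = incl1 k g h x + incl2 k g h x := by
  simp [diagMor, Prod.ext_iff]
lemma diagMor_inr (v : h) :
    diagMor k g h (LinearMap.inr k g h v) = inclh k g h v := by
  simp [diagMor, Prod.ext_iff]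

end MyIncl
section SumTools
variable {g A : Type*} [LieRing g] [LieAlgebra k g] [CommRing A] [Algebra k A]

/-- The bilinear map `(x, y) ↦ F1 x * F2 y`. -/
noncomputable def mulBil (F1 F2 : g →ₗ[k] A) : g →ₗ[k] g →ₗ[k] A :=
  LinearMap.mk₂ k (fun x y => F1 x * F2 y)
    (fun x x' y => by simp [add_mul]) (fun c x y => by simp [smul_mul_assoc])
    (fun x y y' => by simp [mul_add]) (fun c x y => by simp [mul_smul_comm])

@[simp] lemma mulBil_apply (F1 F2 : g →ₗ[k] A) (x y : g) :
    mulBil (k := k) F1 F2 x y = F1 x * F2 y := rfl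

lemma sum_symm {tg : g ⊗[k] g} (htg_symm : TensorProduct.comm k g g tg = tg)
    {S : Finset (g × g)} (hS : tg = ∑ p ∈ S, p.1 ⊗ₜ[k] p.2) (F1 F2 : g →ₗ[k] A) :
    ∑ p ∈ S, F1 p.1 * F2 p.2 = ∑ p ∈ S, F1 p.2 * F2 p.1 := by
  have h1 : ∑ p ∈ S, F1 p.1 * F2 p.2
      = TensorProduct.lift (mulBil (k := k) F1 F2) tg := by
    rw [hS]; simp
  have h2 : TensorProduct.lift (mulBil (k := k) F1 F2) (TensorProduct.comm k g g tg)
      = ∑ p ∈ S, F1 p.2 * F2 p.1 := by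
    conv_lhs => rw [hS]
    simp
  rw [h1, ← htg_symm, h2]

lemma sum_inv {tg : g ⊗[k] g} (htg_inv : ∀ x : g, ⁅x, tg⁆ = 0)
    {S : Finset (g × g)} (hS : tg = ∑ p ∈ S, p.1 ⊗ₜ[k] p.2) (u : g) (F1 F2 : g →ₗ[k] A) :
    (∑ p ∈ S, F1 ⁅u, p.1⁆ * F2 p.2) + ∑ p ∈ S, F1 p.1 * F2 ⁅u, p.2⁆ = 0 := by
  have h0 : TensorProduct.lift (mulBil (k := k) F1 F2) ⁅u, tg⁆ = 0 := by
    rw [htg_inv u]; simp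
  have h1 : ⁅u, tg⁆ = ∑ p ∈ S, (⁅u, p.1⁆ ⊗ₜ[k] p.2 + p.1 ⊗ₜ[k] ⁅u, p.2⁆) := by
    conv_lhs => rw [hS]
    rw [show ⁅u, ∑ p ∈ S, p.1 ⊗ₜ[k] p.2⁆
        = LieModule.toEnd k g (g ⊗[k] g) u (∑ p ∈ S, p.1 ⊗ₜ[k] p.2) from rfl,
      map_sum]
    exact Finset.sum_congr rfl fun p _ => by
      simp [TensorProduct.LieModule.lie_tmul_right]
  rw [h1, map_sum] at h0
  simpa [Finset.sum_add_distrib] using h0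
end SumTools
section Core
variable {g A : Type*} [LieRing g] [LieAlgebra k g] [CommRing A] [Algebra k A]
variable {tg : g ⊗[k] g} {S : Finset (g × g)}

lemma sum_symm3 (htg_symm : TensorProduct.comm k g g tg = tg)
    (hS : tg = ∑ p ∈ S, p.1 ⊗ₜ[k] p.2) (F1 F2 : g →ₗ[k] A) (c : A) :
    ∑ p ∈ S, F1 p.1 * F2 p.2 * c = ∑ p ∈ S, F1 p.2 * F2 p.1 * c := by
  have h := sum_symm htg_symm hS F1 ((LinearMap.mulRight k c).comp F2)
  simpa [mul_assoc] using h

lemma sum_inv3 (htg_inv : ∀ x : g, ⁅x, tg⁆ = 0)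
    (hS : tg = ∑ p ∈ S, p.1 ⊗ₜ[k] p.2) (u : g) (F1 F2 : g →ₗ[k] A) (c : A) :
    ∑ p ∈ S, F1 ⁅u, p.1⁆ * F2 p.2 * c = - ∑ p ∈ S, F1 p.1 * F2 ⁅u, p.2⁆ * c := by
  have h := sum_inv htg_inv hS u F1 ((LinearMap.mulRight k c).comp F2)
  simp only [LinearMap.coe_comp, Function.comp_apply, LinearMap.mulRight_apply] at h
  rw [eq_neg_iff_add_eq_zero]
  simpa [mul_assoc] using h

lemma sum_swapPQ (f : (g × g) → (g × g) → A) :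
    ∑ p ∈ S, ∑ q ∈ S, f p q = ∑ p ∈ S, ∑ q ∈ S, f q p := Finset.sum_comm

variable (E1 E2 : g →ₗ[k] Module.End k A)

/-- evaluation linear map `x ↦ E x a` -/
noncomputable def evA (E : g →ₗ[k] Module.End k A) (a : A) : g →ₗ[k] A :=
  E.flip a

@[simp] lemma evA_apply (E : g →ₗ[k] Module.End k A) (a : A) (x : g) :
    evA (k := k) E a x = E x a := rfl

/-- `x ↦ E ⁅u, x⁆ a` -/
noncomputable def evAd (E : g →ₗ[k] Module.End k A) (u : g) (a : A) : g →ₗ[k] A :=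
  (E.flip a).comp (LieAlgebra.ad k g u)

@[simp] lemma evAd_apply (E : g →ₗ[k] Module.End k A) (u : g) (a : A) (x : g) :
    evAd (k := k) E u a x = E ⁅u, x⁆ a := rfl

lemma lie_swap {L : Type*} [LieRing L] (x y : L) : (⁅x, y⁆ : L) = -⁅y, x⁆ := by
  rw [← lie_skew]

/-- Group G1. -/
lemma groupG1 (htg_inv : ∀ x : g, ⁅x, tg⁆ = 0)
    (hS : tg = ∑ p ∈ S, p.1 ⊗ₜ[k] p.2)
    (hlie2 : ∀ (x y : g) (a : A), E2 ⁅x, y⁆ a = E2 x (E2 y a) - E2 y (E2 x a))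
    (a₁ a₂ a₃ : A) :
    (∑ p ∈ S, ∑ q ∈ S, E2 p.1 (E2 q.1 a₁) * E1 q.2 a₃ * E1 p.2 a₂)
      - ∑ p ∈ S, ∑ q ∈ S, E2 p.1 (E2 q.1 a₁) * E1 q.2 a₂ * E1 p.2 a₃
    = - ∑ p ∈ S, ∑ q ∈ S, E2 p.1 a₁ * (E1 ⁅p.2, q.1⁆ a₂ * E1 q.2 a₃) := by
  rw [sum_swapPQ (fun p q => E2 p.1 (E2 q.1 a₁) * E1 q.2 a₂ * E1 p.2 a₃)]
  rw [← Finset.sum_sub_distrib]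
  simp only [← Finset.sum_sub_distrib]
  have step1 : ∀ p ∈ S, ∀ q ∈ S,
      E2 p.1 (E2 q.1 a₁) * E1 q.2 a₃ * E1 p.2 a₂
        - E2 q.1 (E2 p.1 a₁) * E1 p.2 a₂ * E1 q.2 a₃
      = E2 ⁅p.1, q.1⁆ a₁ * E1 p.2 a₂ * E1 q.2 a₃ := by
    intro p _ q _
    rw [hlie2]
    ring
  rw [Finset.sum_congr rfl fun p hp => Finset.sum_congr rfl fun q hq => step1 p hp q hq]
  rw [Finset.sum_comm]
  have step2 : ∀ q ∈ S,
      (∑ p ∈ S, E2 ⁅p.1, q.1⁆ a₁ * E1 p.2 a₂ * E1 q.2 a₃)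
        = - ∑ p ∈ S, E2 p.1 a₁ * (E1 ⁅p.2, q.1⁆ a₂ * E1 q.2 a₃) := by
    intro q _
    calc (∑ p ∈ S, E2 ⁅p.1, q.1⁆ a₁ * E1 p.2 a₂ * E1 q.2 a₃)
        = ∑ p ∈ S, -(evA (k := k) E2 a₁ ⁅q.1, p.1⁆ * evA (k := k) E1 a₂ p.2 * E1 q.2 a₃) := by
          refine Finset.sum_congr rfl fun p _ => ?_
          rw [lie_swap p.1 q.1]
          simp only [map_neg, LinearMap.neg_apply, evA_apply]
          ring
      _ = - ∑ p ∈ S, evA (k := k) E2 a₁ ⁅q.1, p.1⁆ * evA (k := k) E1 a₂ p.2 * E1 q.2 a₃ := by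
          rw [Finset.sum_neg_distrib]
      _ = ∑ p ∈ S, evA (k := k) E2 a₁ p.1 * evA (k := k) E1 a₂ ⁅q.1, p.2⁆ * E1 q.2 a₃ := by
          rw [sum_inv3 htg_inv hS q.1 (evA (k := k) E2 a₁) (evA (k := k) E1 a₂) (E1 q.2 a₃),
            neg_neg]
      _ = - ∑ p ∈ S, E2 p.1 a₁ * (E1 ⁅p.2, q.1⁆ a₂ * E1 q.2 a₃) := by
          rw [← Finset.sum_neg_distrib]
          refine Finset.sum_congr rfl fun p _ => ?_
          rw [lie_swap q.1 p.2]
          simp only [map_neg, LinearMap.neg_apply, evA_apply]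
          ring
  rw [Finset.sum_congr rfl step2, Finset.sum_neg_distrib, Finset.sum_comm]

/-- Pair cancellation. -/
lemma claimP (hcomm : ∀ (x y : g) (a : A), E1 x (E2 y a) = E2 y (E1 x a)) (a b c : A) :
    (∑ p ∈ S, ∑ q ∈ S, E2 q.1 b * E2 p.1 (E1 q.2 c) * E1 p.2 a)
      = ∑ p ∈ S, ∑ q ∈ S, E2 p.1 b * (E1 p.2 (E2 q.1 c) * E1 q.2 a) := by
  rw [sum_swapPQ (fun p q => E2 q.1 b * E2 p.1 (E1 q.2 c) * E1 p.2 a)]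
  refine Finset.sum_congr rfl fun p _ => Finset.sum_congr rfl fun q _ => ?_
  rw [← hcomm]
  ring

/-- Group G2. -/
lemma groupG2 (htg_symm : TensorProduct.comm k g g tg = tg)
    (hS : tg = ∑ p ∈ S, p.1 ⊗ₜ[k] p.2)
    (hlie2 : ∀ (x y : g) (a : A), E2 ⁅x, y⁆ a = E2 x (E2 y a) - E2 y (E2 x a))
    (a₁ a₂ a₃ : A) :
    (∑ p ∈ S, ∑ q ∈ S, E2 p.1 (E2 q.1 a₂) * E1 q.2 a₁ * E1 p.2 a₃)
      - ∑ p ∈ S, ∑ q ∈ S, E2 p.1 (E2 q.1 a₂) * E1 q.2 a₃ * E1 p.2 a₁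
    = - ∑ p ∈ S, ∑ q ∈ S, E1 p.1 a₁ * (E2 ⁅p.2, q.1⁆ a₂ * E1 q.2 a₃) := by
  rw [sum_swapPQ (fun p q => E2 p.1 (E2 q.1 a₂) * E1 q.2 a₁ * E1 p.2 a₃)]
  simp only [← Finset.sum_sub_distrib]
  have step1 : ∀ p ∈ S, ∀ q ∈ S,
      E2 q.1 (E2 p.1 a₂) * E1 p.2 a₁ * E1 q.2 a₃
        - E2 p.1 (E2 q.1 a₂) * E1 q.2 a₃ * E1 p.2 a₁
      = -(((-(evAd (k := k) E2 q.1 a₂)) p.1) * evA (k := k) E1 a₁ p.2 * E1 q.2 a₃) := by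
    intro p _ q _
    simp only [LinearMap.neg_apply, evAd_apply, evA_apply]
    rw [hlie2]
    ring
  rw [Finset.sum_congr rfl fun p hp => Finset.sum_congr rfl fun q hq => step1 p hp q hq]
  rw [Finset.sum_comm]
  have step2 : ∀ q ∈ S,
      (∑ p ∈ S, -(((-(evAd (k := k) E2 q.1 a₂)) p.1) * evA (k := k) E1 a₁ p.2 * E1 q.2 a₃))
        = - ∑ p ∈ S, E1 p.1 a₁ * (E2 ⁅p.2, q.1⁆ a₂ * E1 q.2 a₃) := by
    intro q _
    rw [Finset.sum_neg_distrib,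
      sum_symm3 htg_symm hS (-(evAd (k := k) E2 q.1 a₂)) (evA (k := k) E1 a₁) (E1 q.2 a₃)]
    congr 1
    refine Finset.sum_congr rfl fun p _ => ?_
    simp only [LinearMap.neg_apply, evAd_apply, evA_apply]
    rw [lie_swap p.2 q.1, map_neg]
    simp only [LinearMap.neg_apply]
    ring
  rw [Finset.sum_congr rfl step2, Finset.sum_neg_distrib, Finset.sum_comm]

/-- Group G3. -/
lemma groupG3 (htg_symm : TensorProduct.comm k g g tg = tg)
    (htg_inv : ∀ x : g, ⁅x, tg⁆ = 0)
    (hS : tg = ∑ p ∈ S, p.1 ⊗ₜ[k] p.2)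
    (hlie2 : ∀ (x y : g) (a : A), E2 ⁅x, y⁆ a = E2 x (E2 y a) - E2 y (E2 x a))
    (a₁ a₂ a₃ : A) :
    (∑ p ∈ S, ∑ q ∈ S, E2 p.1 (E2 q.1 a₃) * E1 q.2 a₂ * E1 p.2 a₁)
      - ∑ p ∈ S, ∑ q ∈ S, E2 p.1 (E2 q.1 a₃) * E1 q.2 a₁ * E1 p.2 a₂
    = - ∑ p ∈ S, ∑ q ∈ S, E1 p.1 a₁ * (E1 ⁅p.2, q.1⁆ a₂ * E2 q.2 a₃) := by
  rw [sum_swapPQ (fun p q => E2 p.1 (E2 q.1 a₃) * E1 q.2 a₁ * E1 p.2 a₂)]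
  simp only [← Finset.sum_sub_distrib]
  have step1 : ∀ p ∈ S, ∀ q ∈ S,
      E2 p.1 (E2 q.1 a₃) * E1 q.2 a₂ * E1 p.2 a₁
        - E2 q.1 (E2 p.1 a₃) * E1 p.2 a₁ * E1 q.2 a₂
      = ((-(evAd (k := k) E2 q.1 a₃)) p.1) * evA (k := k) E1 a₁ p.2 * E1 q.2 a₂ := by
    intro p _ q _
    simp only [LinearMap.neg_apply, evAd_apply, evA_apply]
    rw [hlie2]
    ring
  rw [Finset.sum_congr rfl fun p hp => Finset.sum_congr rfl fun q hq => step1 p hp q hq]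
  rw [Finset.sum_comm]
  have step2 : ∀ q ∈ S,
      (∑ p ∈ S, ((-(evAd (k := k) E2 q.1 a₃)) p.1) * evA (k := k) E1 a₁ p.2 * E1 q.2 a₂)
        = ∑ p ∈ S, E1 p.1 a₁ * (E2 ⁅p.2, q.1⁆ a₃ * E1 q.2 a₂) := by
    intro q _
    rw [sum_symm3 htg_symm hS (-(evAd (k := k) E2 q.1 a₃)) (evA (k := k) E1 a₁) (E1 q.2 a₂)]
    refine Finset.sum_congr rfl fun p _ => ?_
    simp only [LinearMap.neg_apply, evAd_apply, evA_apply]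
    rw [lie_swap p.2 q.1, map_neg]
    simp only [LinearMap.neg_apply]
    ring
  rw [Finset.sum_congr rfl step2, Finset.sum_comm]
  -- now: ∑ p ∑ q, E1 p.1 a₁ * (E2 ⁅p.2,q.1⁆ a₃ * E1 q.2 a₂); invariance in q for fixed p
  have step3 : ∀ p ∈ S,
      (∑ q ∈ S, E1 p.1 a₁ * (E2 ⁅p.2, q.1⁆ a₃ * E1 q.2 a₂))
        = - ∑ q ∈ S, E1 p.1 a₁ * (E1 ⁅p.2, q.1⁆ a₂ * E2 q.2 a₃) := by
    intro p _
    have e1 : (∑ q ∈ S, E1 p.1 a₁ * (E2 ⁅p.2, q.1⁆ a₃ * E1 q.2 a₂))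
        = ∑ q ∈ S, evA (k := k) E2 a₃ ⁅p.2, q.1⁆ * evA (k := k) E1 a₂ q.2 * (E1 p.1 a₁) := by
      exact Finset.sum_congr rfl fun q _ => by simp only [evA_apply]; ring
    rw [e1, sum_inv3 htg_inv hS p.2 (evA (k := k) E2 a₃) (evA (k := k) E1 a₂) (E1 p.1 a₁)]
    have e2 : (∑ q ∈ S, evA (k := k) E2 a₃ q.1 * evA (k := k) E1 a₂ ⁅p.2, q.2⁆ * (E1 p.1 a₁))
        = ∑ q ∈ S, evAd (k := k) E1 p.2 a₂ q.2 * evA (k := k) E2 a₃ q.1 * (E1 p.1 a₁) := by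
      exact Finset.sum_congr rfl fun q _ => by simp only [evA_apply, evAd_apply]; ring
    rw [e2, ← sum_symm3 htg_symm hS (evAd (k := k) E1 p.2 a₂) (evA (k := k) E2 a₃) (E1 p.1 a₁)]
    congr 1
    exact Finset.sum_congr rfl fun q _ => by simp only [evA_apply, evAd_apply]; ring
  rw [Finset.sum_congr rfl step3, Finset.sum_neg_distrib]

/-- Group G4. -/
lemma groupG4 (htg_symm : TensorProduct.comm k g g tg = tg)
    (htg_inv : ∀ x : g, ⁅x, tg⁆ = 0)
    (hS : tg = ∑ p ∈ S, p.1 ⊗ₜ[k] p.2)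
    (hlie1 : ∀ (x y : g) (a : A), E1 ⁅x, y⁆ a = E1 x (E1 y a) - E1 y (E1 x a))
    (a₁ a₂ a₃ : A) :
    (∑ p ∈ S, ∑ q ∈ S, E2 p.1 a₂ * (E2 q.1 a₃ * E1 p.2 (E1 q.2 a₁)))
      - ∑ p ∈ S, ∑ q ∈ S, E2 p.1 a₃ * (E2 q.1 a₂ * E1 p.2 (E1 q.2 a₁))
    = - ∑ p ∈ S, ∑ q ∈ S, E1 p.1 a₁ * (E2 ⁅p.2, q.1⁆ a₂ * E2 q.2 a₃) := by
  rw [sum_swapPQ (fun p q => E2 p.1 a₃ * (E2 q.1 a₂ * E1 p.2 (E1 q.2 a₁)))]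
  simp only [← Finset.sum_sub_distrib]
  have step1 : ∀ p ∈ S, ∀ q ∈ S,
      E2 p.1 a₂ * (E2 q.1 a₃ * E1 p.2 (E1 q.2 a₁))
        - E2 q.1 a₃ * (E2 p.1 a₂ * E1 q.2 (E1 p.2 a₁))
      = evA (k := k) E2 a₂ p.1 * evA (k := k) E1 a₁ ⁅p.2, q.2⁆ * E2 q.1 a₃ := by
    intro p _ q _
    simp only [evA_apply]
    rw [hlie1]
    ring
  rw [Finset.sum_congr rfl fun p hp => Finset.sum_congr rfl fun q hq => step1 p hp q hq]
  rw [Finset.sum_comm]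
  have step2 : ∀ q ∈ S,
      (∑ p ∈ S, evA (k := k) E2 a₂ p.1 * evA (k := k) E1 a₁ ⁅p.2, q.2⁆ * E2 q.1 a₃)
        = ∑ p ∈ S, evAd (k := k) E2 q.2 a₂ p.2 * evA (k := k) E1 a₁ p.1 * E2 q.1 a₃ := by
    intro q _
    have e1 : ∀ p : g × g,
        evA (k := k) E2 a₂ p.1 * evA (k := k) E1 a₁ ⁅p.2, q.2⁆ * E2 q.1 a₃
        = -(evA (k := k) E2 a₂ p.1 * evA (k := k) E1 a₁ ⁅q.2, p.2⁆ * E2 q.1 a₃) := by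
      intro p
      rw [lie_swap p.2 q.2, map_neg]
      ring
    rw [Finset.sum_congr rfl fun p _ => e1 p, Finset.sum_neg_distrib,
      ← sum_inv3 htg_inv hS q.2 (evA (k := k) E2 a₂) (evA (k := k) E1 a₁) (E2 q.1 a₃)]
    rw [show (∑ p ∈ S, evA (k := k) E2 a₂ ⁅q.2, p.1⁆ * evA (k := k) E1 a₁ p.2 * E2 q.1 a₃)
        = ∑ p ∈ S, evAd (k := k) E2 q.2 a₂ p.1 * evA (k := k) E1 a₁ p.2 * E2 q.1 a₃ from
      Finset.sum_congr rfl fun p _ => by simp only [evA_apply, evAd_apply]]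
    rw [sum_symm3 htg_symm hS (evAd (k := k) E2 q.2 a₂) (evA (k := k) E1 a₁) (E2 q.1 a₃)]
  rw [Finset.sum_congr rfl step2, Finset.sum_comm]
  have step3 : ∀ p ∈ S,
      (∑ q ∈ S, evAd (k := k) E2 q.2 a₂ p.2 * evA (k := k) E1 a₁ p.1 * E2 q.1 a₃)
        = - ∑ q ∈ S, E1 p.1 a₁ * (E2 ⁅p.2, q.1⁆ a₂ * E2 q.2 a₃) := by
    intro p _
    have e2 : ∀ q : g × g,
        evAd (k := k) E2 q.2 a₂ p.2 * evA (k := k) E1 a₁ p.1 * E2 q.1 a₃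
        = evA (k := k) E2 a₃ q.1 * (-(evAd (k := k) E2 p.2 a₂)) q.2 * E1 p.1 a₁ := by
      intro q
      simp only [evA_apply, evAd_apply, LinearMap.neg_apply]
      rw [lie_swap q.2 p.2, map_neg]
      simp only [LinearMap.neg_apply]
      ring
    rw [Finset.sum_congr rfl fun q _ => e2 q,
      sum_symm3 htg_symm hS (evA (k := k) E2 a₃) (-(evAd (k := k) E2 p.2 a₂)) (E1 p.1 a₁)]
    rw [← Finset.sum_neg_distrib]
    exact Finset.sum_congr rfl fun q _ => by
      simp only [evA_apply, evAd_apply, LinearMap.neg_apply]; ring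
  rw [Finset.sum_congr rfl step3, Finset.sum_neg_distrib]

/-- Group G5. -/
lemma groupG5 (htg_symm : TensorProduct.comm k g g tg = tg)
    (hS : tg = ∑ p ∈ S, p.1 ⊗ₜ[k] p.2)
    (hlie1 : ∀ (x y : g) (a : A), E1 ⁅x, y⁆ a = E1 x (E1 y a) - E1 y (E1 x a))
    (a₁ a₂ a₃ : A) :
    (∑ p ∈ S, ∑ q ∈ S, E2 p.1 a₃ * (E2 q.1 a₁ * E1 p.2 (E1 q.2 a₂)))
      - ∑ p ∈ S, ∑ q ∈ S, E2 p.1 a₁ * (E2 q.1 a₃ * E1 p.2 (E1 q.2 a₂))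
    = - ∑ p ∈ S, ∑ q ∈ S, E2 p.1 a₁ * (E1 ⁅p.2, q.1⁆ a₂ * E2 q.2 a₃) := by
  rw [sum_swapPQ (fun p q => E2 p.1 a₃ * (E2 q.1 a₁ * E1 p.2 (E1 q.2 a₂)))]
  simp only [← Finset.sum_sub_distrib]
  have step1 : ∀ p ∈ S, ∀ q ∈ S,
      E2 q.1 a₃ * (E2 p.1 a₁ * E1 q.2 (E1 p.2 a₂))
        - E2 p.1 a₁ * (E2 q.1 a₃ * E1 p.2 (E1 q.2 a₂))
      = -(evA (k := k) E2 a₃ q.1 * evAd (k := k) E1 p.2 a₂ q.2 * E2 p.1 a₁) := by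
    intro p _ q _
    simp only [evA_apply, evAd_apply]
    rw [hlie1]
    ring
  rw [Finset.sum_congr rfl fun p hp => Finset.sum_congr rfl fun q hq => step1 p hp q hq]
  have step2 : ∀ p ∈ S,
      (∑ q ∈ S, -(evA (k := k) E2 a₃ q.1 * evAd (k := k) E1 p.2 a₂ q.2 * E2 p.1 a₁))
        = - ∑ q ∈ S, E2 p.1 a₁ * (E1 ⁅p.2, q.1⁆ a₂ * E2 q.2 a₃) := by
    intro p _
    rw [Finset.sum_neg_distrib,
      sum_symm3 htg_symm hS (evA (k := k) E2 a₃) (evAd (k := k) E1 p.2 a₂) (E2 p.1 a₁)]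
    congr 1
    exact Finset.sum_congr rfl fun q _ => by simp only [evA_apply, evAd_apply]; ring
  rw [Finset.sum_congr rfl step2, Finset.sum_neg_distrib]

/-- Group G6. -/
lemma groupG6 (htg_inv : ∀ x : g, ⁅x, tg⁆ = 0)
    (hS : tg = ∑ p ∈ S, p.1 ⊗ₜ[k] p.2)
    (hlie1 : ∀ (x y : g) (a : A), E1 ⁅x, y⁆ a = E1 x (E1 y a) - E1 y (E1 x a))
    (a₁ a₂ a₃ : A) :
    (∑ p ∈ S, ∑ q ∈ S, E2 p.1 a₁ * (E2 q.1 a₂ * E1 p.2 (E1 q.2 a₃)))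
      - ∑ p ∈ S, ∑ q ∈ S, E2 p.1 a₂ * (E2 q.1 a₁ * E1 p.2 (E1 q.2 a₃))
    = - ∑ p ∈ S, ∑ q ∈ S, E2 p.1 a₁ * (E2 ⁅p.2, q.1⁆ a₂ * E1 q.2 a₃) := by
  rw [sum_swapPQ (fun p q => E2 p.1 a₂ * (E2 q.1 a₁ * E1 p.2 (E1 q.2 a₃)))]
  simp only [← Finset.sum_sub_distrib]
  have step1 : ∀ p ∈ S, ∀ q ∈ S,
      E2 p.1 a₁ * (E2 q.1 a₂ * E1 p.2 (E1 q.2 a₃))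
        - E2 q.1 a₂ * (E2 p.1 a₁ * E1 q.2 (E1 p.2 a₃))
      = evA (k := k) E2 a₂ q.1 * evA (k := k) E1 a₃ ⁅p.2, q.2⁆ * E2 p.1 a₁ := by
    intro p _ q _
    simp only [evA_apply]
    rw [hlie1]
    ring
  rw [Finset.sum_congr rfl fun p hp => Finset.sum_congr rfl fun q hq => step1 p hp q hq]
  have step2 : ∀ p ∈ S,
      (∑ q ∈ S, evA (k := k) E2 a₂ q.1 * evA (k := k) E1 a₃ ⁅p.2, q.2⁆ * E2 p.1 a₁)
        = - ∑ q ∈ S, E2 p.1 a₁ * (E2 ⁅p.2, q.1⁆ a₂ * E1 q.2 a₃) := by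
    intro p _
    rw [show (∑ q ∈ S, evA (k := k) E2 a₂ q.1 * evA (k := k) E1 a₃ ⁅p.2, q.2⁆ * E2 p.1 a₁)
        = - ∑ q ∈ S, evA (k := k) E2 a₂ ⁅p.2, q.1⁆ * evA (k := k) E1 a₃ q.2 * E2 p.1 a₁ from by
      rw [sum_inv3 htg_inv hS p.2 (evA (k := k) E2 a₂) (evA (k := k) E1 a₃) (E2 p.1 a₁),
        neg_neg]]
    congr 1
    exact Finset.sum_congr rfl fun q _ => by simp only [evA_apply]; ring
  rw [Finset.sum_congr rfl step2, Finset.sum_neg_distrib]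


/-- The correction bracket as a finite sum. -/
noncomputable def corrS (E1 E2 : g →ₗ[k] Module.End k A) (S : Finset (g × g)) (a b : A) : A :=
  ∑ p ∈ S, (E2 p.1 a * E1 p.2 b - E2 p.1 b * E1 p.2 a)

/-- Core cyclic identity for the correction term. -/
lemma core_jacobi (htg_symm : TensorProduct.comm k g g tg = tg)
    (htg_inv : ∀ x : g, ⁅x, tg⁆ = 0)
    (hS : tg = ∑ p ∈ S, p.1 ⊗ₜ[k] p.2)
    (hder1 : ∀ (x : g) (a b : A), E1 x (a * b) = E1 x a * b + a * E1 x b)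
    (hder2 : ∀ (x : g) (a b : A), E2 x (a * b) = E2 x a * b + a * E2 x b)
    (hcomm : ∀ (x y : g) (a : A), E1 x (E2 y a) = E2 y (E1 x a))
    (hlie1 : ∀ (x y : g) (a : A), E1 ⁅x, y⁆ a = E1 x (E1 y a) - E1 y (E1 x a))
    (hlie2 : ∀ (x y : g) (a : A), E2 ⁅x, y⁆ a = E2 x (E2 y a) - E2 y (E2 x a))
    (a₁ a₂ a₃ : A) :
    corrS (k := k) E1 E2 S a₁ (corrS (k := k) E1 E2 S a₂ a₃)
      + corrS (k := k) E1 E2 S a₂ (corrS (k := k) E1 E2 S a₃ a₁)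
      + corrS (k := k) E1 E2 S a₃ (corrS (k := k) E1 E2 S a₁ a₂)
    = - ∑ p ∈ S, ∑ q ∈ S,
        (E2 p.1 a₁ * (E1 ⁅p.2, q.1⁆ a₂ * E1 q.2 a₃)
         + E1 p.1 a₁ * (E2 ⁅p.2, q.1⁆ a₂ * E1 q.2 a₃)
         + E1 p.1 a₁ * (E1 ⁅p.2, q.1⁆ a₂ * E2 q.2 a₃)
         + E1 p.1 a₁ * (E2 ⁅p.2, q.1⁆ a₂ * E2 q.2 a₃)
         + E2 p.1 a₁ * (E1 ⁅p.2, q.1⁆ a₂ * E2 q.2 a₃)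
         + E2 p.1 a₁ * (E2 ⁅p.2, q.1⁆ a₂ * E1 q.2 a₃)) := by
  have hexp : ∀ a b c : A, corrS (k := k) E1 E2 S a (corrS (k := k) E1 E2 S b c)
      = ∑ p ∈ S, ∑ q ∈ S,
        (E2 p.1 a * (E1 p.2 (E2 q.1 b) * E1 q.2 c)
         + E2 p.1 a * (E2 q.1 b * E1 p.2 (E1 q.2 c))
         - E2 p.1 a * (E1 p.2 (E2 q.1 c) * E1 q.2 b)
         - E2 p.1 a * (E2 q.1 c * E1 p.2 (E1 q.2 b))
         - E2 p.1 (E2 q.1 b) * E1 q.2 c * E1 p.2 a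
         - E2 q.1 b * E2 p.1 (E1 q.2 c) * E1 p.2 a
         + E2 p.1 (E2 q.1 c) * E1 q.2 b * E1 p.2 a
         + E2 q.1 c * E2 p.1 (E1 q.2 b) * E1 p.2 a) := by
    intro a b c
    unfold corrS
    refine Finset.sum_congr rfl fun p _ => ?_
    rw [map_sum, map_sum, Finset.mul_sum, Finset.sum_mul, ← Finset.sum_sub_distrib]
    refine Finset.sum_congr rfl fun q _ => ?_
    rw [map_sub, map_sub, hder1 p.2 (E2 q.1 b) (E1 q.2 c), hder1 p.2 (E2 q.1 c) (E1 q.2 b),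
      hder2 p.1 (E2 q.1 b) (E1 q.2 c), hder2 p.1 (E2 q.1 c) (E1 q.2 b)]
    ring
  rw [hexp a₁ a₂ a₃, hexp a₂ a₃ a₁, hexp a₃ a₁ a₂]
  have hsplit :
      (∑ p ∈ S, ∑ q ∈ S,
        (E2 p.1 a₁ * (E1 p.2 (E2 q.1 a₂) * E1 q.2 a₃)
        + E2 p.1 a₁ * (E2 q.1 a₂ * E1 p.2 (E1 q.2 a₃))
        - E2 p.1 a₁ * (E1 p.2 (E2 q.1 a₃) * E1 q.2 a₂)
        - E2 p.1 a₁ * (E2 q.1 a₃ * E1 p.2 (E1 q.2 a₂))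
        - E2 p.1 (E2 q.1 a₂) * E1 q.2 a₃ * E1 p.2 a₁
        - E2 q.1 a₂ * E2 p.1 (E1 q.2 a₃) * E1 p.2 a₁
        + E2 p.1 (E2 q.1 a₃) * E1 q.2 a₂ * E1 p.2 a₁
        + E2 q.1 a₃ * E2 p.1 (E1 q.2 a₂) * E1 p.2 a₁))
      + (∑ p ∈ S, ∑ q ∈ S,
        (E2 p.1 a₂ * (E1 p.2 (E2 q.1 a₃) * E1 q.2 a₁)
        + E2 p.1 a₂ * (E2 q.1 a₃ * E1 p.2 (E1 q.2 a₁))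
        - E2 p.1 a₂ * (E1 p.2 (E2 q.1 a₁) * E1 q.2 a₃)
        - E2 p.1 a₂ * (E2 q.1 a₁ * E1 p.2 (E1 q.2 a₃))
        - E2 p.1 (E2 q.1 a₃) * E1 q.2 a₁ * E1 p.2 a₂
        - E2 q.1 a₃ * E2 p.1 (E1 q.2 a₁) * E1 p.2 a₂
        + E2 p.1 (E2 q.1 a₁) * E1 q.2 a₃ * E1 p.2 a₂
        + E2 q.1 a₁ * E2 p.1 (E1 q.2 a₃) * E1 p.2 a₂))
      + (∑ p ∈ S, ∑ q ∈ S,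
        (E2 p.1 a₃ * (E1 p.2 (E2 q.1 a₁) * E1 q.2 a₂)
        + E2 p.1 a₃ * (E2 q.1 a₁ * E1 p.2 (E1 q.2 a₂))
        - E2 p.1 a₃ * (E1 p.2 (E2 q.1 a₂) * E1 q.2 a₁)
        - E2 p.1 a₃ * (E2 q.1 a₂ * E1 p.2 (E1 q.2 a₁))
        - E2 p.1 (E2 q.1 a₁) * E1 q.2 a₂ * E1 p.2 a₃
        - E2 q.1 a₁ * E2 p.1 (E1 q.2 a₂) * E1 p.2 a₃
        + E2 p.1 (E2 q.1 a₂) * E1 q.2 a₁ * E1 p.2 a₃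
        + E2 q.1 a₂ * E2 p.1 (E1 q.2 a₁) * E1 p.2 a₃))
      = ((∑ p ∈ S, ∑ q ∈ S, E2 p.1 a₂ * (E1 p.2 (E2 q.1 a₃) * E1 q.2 a₁))
          - (∑ p ∈ S, ∑ q ∈ S, E2 q.1 a₂ * E2 p.1 (E1 q.2 a₃) * E1 p.2 a₁))
        + ((∑ p ∈ S, ∑ q ∈ S, E2 p.1 a₃ * (E1 p.2 (E2 q.1 a₁) * E1 q.2 a₂))
          - (∑ p ∈ S, ∑ q ∈ S, E2 q.1 a₃ * E2 p.1 (E1 q.2 a₁) * E1 p.2 a₂))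
        + ((∑ p ∈ S, ∑ q ∈ S, E2 p.1 a₁ * (E1 p.2 (E2 q.1 a₂) * E1 q.2 a₃))
          - (∑ p ∈ S, ∑ q ∈ S, E2 q.1 a₁ * E2 p.1 (E1 q.2 a₂) * E1 p.2 a₃))
        + ((∑ p ∈ S, ∑ q ∈ S, E2 q.1 a₃ * E2 p.1 (E1 q.2 a₂) * E1 p.2 a₁)
          - (∑ p ∈ S, ∑ q ∈ S, E2 p.1 a₃ * (E1 p.2 (E2 q.1 a₂) * E1 q.2 a₁)))
        + ((∑ p ∈ S, ∑ q ∈ S, E2 q.1 a₁ * E2 p.1 (E1 q.2 a₃) * E1 p.2 a₂)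
          - (∑ p ∈ S, ∑ q ∈ S, E2 p.1 a₁ * (E1 p.2 (E2 q.1 a₃) * E1 q.2 a₂)))
        + ((∑ p ∈ S, ∑ q ∈ S, E2 q.1 a₂ * E2 p.1 (E1 q.2 a₁) * E1 p.2 a₃)
          - (∑ p ∈ S, ∑ q ∈ S, E2 p.1 a₂ * (E1 p.2 (E2 q.1 a₁) * E1 q.2 a₃)))
        + ((∑ p ∈ S, ∑ q ∈ S, E2 p.1 (E2 q.1 a₁) * E1 q.2 a₃ * E1 p.2 a₂)
          - (∑ p ∈ S, ∑ q ∈ S, E2 p.1 (E2 q.1 a₁) * E1 q.2 a₂ * E1 p.2 a₃))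
        + ((∑ p ∈ S, ∑ q ∈ S, E2 p.1 (E2 q.1 a₂) * E1 q.2 a₁ * E1 p.2 a₃)
          - (∑ p ∈ S, ∑ q ∈ S, E2 p.1 (E2 q.1 a₂) * E1 q.2 a₃ * E1 p.2 a₁))
        + ((∑ p ∈ S, ∑ q ∈ S, E2 p.1 (E2 q.1 a₃) * E1 q.2 a₂ * E1 p.2 a₁)
          - (∑ p ∈ S, ∑ q ∈ S, E2 p.1 (E2 q.1 a₃) * E1 q.2 a₁ * E1 p.2 a₂))
        + ((∑ p ∈ S, ∑ q ∈ S, E2 p.1 a₂ * (E2 q.1 a₃ * E1 p.2 (E1 q.2 a₁)))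
          - (∑ p ∈ S, ∑ q ∈ S, E2 p.1 a₃ * (E2 q.1 a₂ * E1 p.2 (E1 q.2 a₁))))
        + ((∑ p ∈ S, ∑ q ∈ S, E2 p.1 a₃ * (E2 q.1 a₁ * E1 p.2 (E1 q.2 a₂)))
          - (∑ p ∈ S, ∑ q ∈ S, E2 p.1 a₁ * (E2 q.1 a₃ * E1 p.2 (E1 q.2 a₂))))
        + ((∑ p ∈ S, ∑ q ∈ S, E2 p.1 a₁ * (E2 q.1 a₂ * E1 p.2 (E1 q.2 a₃)))
          - (∑ p ∈ S, ∑ q ∈ S, E2 p.1 a₂ * (E2 q.1 a₁ * E1 p.2 (E1 q.2 a₃)))) := by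
    simp only [← Finset.sum_add_distrib, ← Finset.sum_sub_distrib]
    exact Finset.sum_congr rfl fun p _ => Finset.sum_congr rfl fun q _ => by ring
  rw [hsplit]
  rw [claimP (k := k) E1 E2 hcomm a₁ a₂ a₃, claimP (k := k) E1 E2 hcomm a₂ a₃ a₁,
    claimP (k := k) E1 E2 hcomm a₃ a₁ a₂, claimP (k := k) E1 E2 hcomm a₁ a₃ a₂,
    claimP (k := k) E1 E2 hcomm a₂ a₁ a₃, claimP (k := k) E1 E2 hcomm a₃ a₂ a₁,
    groupG1 (k := k) E1 E2 htg_inv hS hlie2 a₁ a₂ a₃,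
    groupG2 (k := k) E1 E2 htg_symm hS hlie2 a₁ a₂ a₃,
    groupG3 (k := k) E1 E2 htg_symm htg_inv hS hlie2 a₁ a₂ a₃,
    groupG4 (k := k) E1 E2 htg_symm htg_inv hS hlie1 a₁ a₂ a₃,
    groupG5 (k := k) E1 E2 htg_symm hS hlie1 a₁ a₂ a₃,
    groupG6 (k := k) E1 E2 htg_inv hS hlie1 a₁ a₂ a₃]
  have hT : (∑ p ∈ S, ∑ q ∈ S,
        (E2 p.1 a₁ * (E1 ⁅p.2, q.1⁆ a₂ * E1 q.2 a₃)
         + E1 p.1 a₁ * (E2 ⁅p.2, q.1⁆ a₂ * E1 q.2 a₃)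
         + E1 p.1 a₁ * (E1 ⁅p.2, q.1⁆ a₂ * E2 q.2 a₃)
         + E1 p.1 a₁ * (E2 ⁅p.2, q.1⁆ a₂ * E2 q.2 a₃)
         + E2 p.1 a₁ * (E1 ⁅p.2, q.1⁆ a₂ * E2 q.2 a₃)
         + E2 p.1 a₁ * (E2 ⁅p.2, q.1⁆ a₂ * E1 q.2 a₃)))
      = (∑ p ∈ S, ∑ q ∈ S, E2 p.1 a₁ * (E1 ⁅p.2, q.1⁆ a₂ * E1 q.2 a₃)) + (∑ p ∈ S, ∑ q ∈ S, E1 p.1 a₁ * (E2 ⁅p.2, q.1⁆ a₂ * E1 q.2 a₃)) + (∑ p ∈ S, ∑ q ∈ S, E1 p.1 a₁ * (E1 ⁅p.2, q.1⁆ a₂ * E2 q.2 a₃)) + (∑ p ∈ S, ∑ q ∈ S, E1 p.1 a₁ * (E2 ⁅p.2, q.1⁆ a₂ * E2 q.2 a₃)) + (∑ p ∈ S, ∑ q ∈ S, E2 p.1 a₁ * (E1 ⁅p.2, q.1⁆ a₂ * E2 q.2 a₃)) + (∑ p ∈ S, ∑ q ∈ S, E2 p.1 a₁ * (E2 ⁅p.2,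 q.1⁆ a₂ * E1 q.2 a₃)) := by
    simp only [Finset.sum_add_distrib]
  rw [hT]
  ring

lemma corrS_skew (a b : A) : corrS (k := k) E1 E2 S a b = - corrS (k := k) E1 E2 S b a := by
  unfold corrS
  rw [← Finset.sum_neg_distrib]
  exact Finset.sum_congr rfl fun p _ => by ring

lemma corrS_add_right (a x y : A) :
    corrS (k := k) E1 E2 S a (x + y)
      = corrS (k := k) E1 E2 S a x + corrS (k := k) E1 E2 S a y := by
  unfold corrS
  rw [← Finset.sum_add_distrib]
  exact Finset.sum_congr rfl fun p _ => by rw [map_add, map_add]; ring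

lemma corrS_smul_right (r : k) (a x : A) :
    corrS (k := k) E1 E2 S a (r • x) = r • corrS (k := k) E1 E2 S a x := by
  unfold corrS
  rw [Finset.smul_sum]
  exact Finset.sum_congr rfl fun p _ => by
    rw [map_smul, map_smul, smul_sub, mul_smul_comm, smul_mul_assoc]

lemma corrS_bider
    (hder1 : ∀ (x : g) (a b : A), E1 x (a * b) = E1 x a * b + a * E1 x b)
    (hder2 : ∀ (x : g) (a b : A), E2 x (a * b) = E2 x a * b + a * E2 x b)
    (a b c : A) :
    corrS (k := k) E1 E2 S a (b * c)
      = corrS (k := k) E1 E2 S a b * c + b * corrS (k := k) E1 E2 S a c := by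
  unfold corrS
  rw [Finset.sum_mul, Finset.mul_sum, ← Finset.sum_add_distrib]
  exact Finset.sum_congr rfl fun p _ => by rw [hder1, hder2]; ring

lemma mixed_vanish (br : A →ₗ[k] A →ₗ[k] A)
    (hskew : ∀ a b, br a b = - br b a)
    (hbider : ∀ a b c, br a (b * c) = br a b * c + b * br a c)
    (hinv1 : ∀ (x : g) (a b : A), E1 x (br a b) = br (E1 x a) b + br a (E1 x b))
    (hinv2 : ∀ (x : g) (a b : A), E2 x (br a b) = br (E2 x a) b + br a (E2 x b))
    (a₁ a₂ a₃ : A) :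
    (br a₁ (corrS (k := k) E1 E2 S a₂ a₃) + corrS (k := k) E1 E2 S a₁ (br a₂ a₃))
      + (br a₂ (corrS (k := k) E1 E2 S a₃ a₁) + corrS (k := k) E1 E2 S a₂ (br a₃ a₁))
      + (br a₃ (corrS (k := k) E1 E2 S a₁ a₂) + corrS (k := k) E1 E2 S a₃ (br a₁ a₂))
    = 0 := by
  unfold corrS
  rw [map_sum (br a₁), map_sum (br a₂), map_sum (br a₃)]
  simp only [← Finset.sum_add_distrib]
  refine Finset.sum_eq_zero fun p _ => ?_
  rw [map_sub (br a₁), map_sub (br a₂), map_sub (br a₃)]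
  rw [hbider a₁ (E2 p.1 a₂) (E1 p.2 a₃), hbider a₁ (E2 p.1 a₃) (E1 p.2 a₂),
    hbider a₂ (E2 p.1 a₃) (E1 p.2 a₁), hbider a₂ (E2 p.1 a₁) (E1 p.2 a₃),
    hbider a₃ (E2 p.1 a₁) (E1 p.2 a₂), hbider a₃ (E2 p.1 a₂) (E1 p.2 a₁)]
  rw [hinv1 p.2 a₂ a₃, hinv1 p.2 a₃ a₁, hinv1 p.2 a₁ a₂,
    hinv2 p.1 a₂ a₃, hinv2 p.1 a₃ a₁, hinv2 p.1 a₁ a₂]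
  rw [hskew (E1 p.2 a₂) a₃, hskew (E1 p.2 a₃) a₁, hskew (E1 p.2 a₁) a₂,
    hskew (E2 p.1 a₂) a₃, hskew (E2 p.1 a₃) a₁, hskew (E2 p.1 a₁) a₂]
  ring

lemma corrS_invariance (htg_inv : ∀ x : g, ⁅x, tg⁆ = 0)
    (hS : tg = ∑ p ∈ S, p.1 ⊗ₜ[k] p.2)
    (D : Module.End k A) (u : g)
    (hD : ∀ a b : A, D (a * b) = D a * b + a * D b)
    (hc1 : ∀ (x : g) (a : A), D (E1 x a) = E1 x (D a) + E1 ⁅u, x⁆ a)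
    (hc2 : ∀ (x : g) (a : A), D (E2 x a) = E2 x (D a) + E2 ⁅u, x⁆ a)
    (a b : A) :
    D (corrS (k := k) E1 E2 S a b)
      = corrS (k := k) E1 E2 S (D a) b + corrS (k := k) E1 E2 S a (D b) := by
  have key1 := sum_inv (A := A) htg_inv hS u (evA (k := k) E2 a) (evA (k := k) E1 b)
  have key2 := sum_inv (A := A) htg_inv hS u (evA (k := k) E2 b) (evA (k := k) E1 a)
  unfold corrS
  rw [map_sum]
  have per : ∀ p ∈ S, D (E2 p.1 a * E1 p.2 b - E2 p.1 b * E1 p.2 a)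
      = ((E2 p.1 (D a) * E1 p.2 b - E2 p.1 (D b) * E1 p.2 a)
          + (E2 p.1 a * E1 p.2 (D b) - E2 p.1 b * E1 p.2 (D a)))
        + ((evA (k := k) E2 a ⁅u, p.1⁆ * evA (k := k) E1 b p.2
            + evA (k := k) E2 a p.1 * evA (k := k) E1 b ⁅u, p.2⁆)
          - (evA (k := k) E2 b ⁅u, p.1⁆ * evA (k := k) E1 a p.2
            + evA (k := k) E2 b p.1 * evA (k := k) E1 a ⁅u, p.2⁆)) := by
    intro p _
    rw [map_sub, hD (E2 p.1 a) (E1 p.2 b), hD (E2 p.1 b) (E1 p.2 a),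
      hc2 p.1 a, hc2 p.1 b, hc1 p.2 a, hc1 p.2 b]
    simp only [evA_apply]
    ring
  rw [Finset.sum_congr rfl per]
  simp only [Finset.sum_add_distrib, Finset.sum_sub_distrib]
  linear_combination key1 - key2

end Core

section Eval
variable {G A : Type*} [LieRing G] [LieAlgebra k G] [CommRing A] [Algebra k A]

lemma tComm2_sum_eval {ι κ : Type*} (S1 : Finset ι) (S2 : Finset κ)
    (P Q : ι → G) (P' Q' : κ → G) :
    tComm2 (k := k) (∑ i ∈ S1, P i ⊗ₜ[k] Q i) (∑ j ∈ S2, P' j ⊗ₜ[k] Q' j)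
      = ∑ i ∈ S1, ∑ j ∈ S2, P i ⊗ₜ[k] (⁅Q i, P' j⁆ ⊗ₜ[k] Q' j) := by
  rw [tComm2_sum_sum]
  exact Finset.sum_congr rfl fun i _ => Finset.sum_congr rfl fun j _ => tComm2_tmul _ _ _ _

lemma tComm2_cross_zero {ι κ : Type*} (S1 : Finset ι) (S2 : Finset κ)
    (P Q : ι → G) (P' Q' : κ → G) (hz : ∀ i j, ⁅Q i, P' j⁆ = (0 : G)) :
    tComm2 (k := k) (∑ i ∈ S1, P i ⊗ₜ[k] Q i) (∑ j ∈ S2, P' j ⊗ₜ[k] Q' j) = 0 := by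
  rw [tComm2_sum_eval]
  refine Finset.sum_eq_zero fun i _ => Finset.sum_eq_zero fun j _ => ?_
  rw [hz i j, TensorProduct.zero_tmul, TensorProduct.tmul_zero]

lemma tComm2_three (X Y Z : G ⊗[k] G) :
    tComm2 (k := k) (X + Y + Z) (X + Y + Z)
      = tComm2 (k := k) X X + tComm2 (k := k) X Y + tComm2 (k := k) X Z
        + tComm2 (k := k) Y X + tComm2 (k := k) Y Y + tComm2 (k := k) Y Z
        + tComm2 (k := k) Z X + tComm2 (k := k) Z Y + tComm2 (k := k) Z Z := by
  simp only [tComm2, TensorProduct.add_tmul, TensorProduct.tmul_add, map_add]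
  abel

lemma tripleEval (ρG : G →ₗ[k] Module.End k A) {ι κ : Type*} (S1 : Finset ι) (S2 : Finset κ)
    (P Q : ι → G) (P' Q' : κ → G) (a₁ a₂ a₃ : A) :
    tripleMul k A (threeLeg (k := k) ρG
        (∑ i ∈ S1, ∑ j ∈ S2, P i ⊗ₜ[k] (⁅Q i, P' j⁆ ⊗ₜ[k] Q' j)) (a₁ ⊗ₜ[k] (a₂ ⊗ₜ[k] a₃)))
      = ∑ i ∈ S1, ∑ j ∈ S2, ρG (P i) a₁ * (ρG ⁅Q i, P' j⁆ a₂ * ρG (Q' j) a₃) := by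
  simp only [map_sum, LinearMap.coe_sum, Finset.sum_apply, LinearMap.sum_apply,
    threeLeg_tmul, tripleMul_tmul]

end Eval

section InclProd
variable {g h : Type*} [LieRing g] [LieAlgebra k g] [LieRing h] [LieAlgebra k h]

lemma lie_inl (x y : g) :
    ⁅LinearMap.inl k g h x, LinearMap.inl k g h y⁆ = LinearMap.inl k g h ⁅x, y⁆ := by
  simp [Prod.ext_iff]
lemma lie_inr (x y : h) :
    ⁅LinearMap.inr k g h x, LinearMap.inr k g h y⁆ = LinearMap.inr k g h ⁅x, y⁆ := by
  simp [Prod.ext_iff]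
lemma lie_inl_inr (x : g) (v : h) :
    ⁅LinearMap.inl k g h x, LinearMap.inr k g h v⁆ = 0 := by
  simp [Prod.ext_iff]
lemma lie_inr_inl (v : h) (x : g) :
    ⁅LinearMap.inr k g h v, LinearMap.inl k g h x⁆ = 0 := by
  simp [Prod.ext_iff]

@[simp] lemma diagMor_apply (p : g × h) : diagMor k g h p = ((p.1, p.1), p.2) := rfl

lemma diagMor_lie_incl1 (p : g × h) (x : g) :
    ⁅diagMor k g h p, incl1 k g h x⁆ = incl1 k g h ⁅p.1, x⁆ := by
  simp [Prod.ext_iff]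
lemma diagMor_lie_incl2 (p : g × h) (x : g) :
    ⁅diagMor k g h p, incl2 k g h x⁆ = incl2 k g h ⁅p.1, x⁆ := by
  simp [Prod.ext_iff]

end InclProd

/-- quasi-Poisson fusion.  If `(A, m, {·,·})` is a
`(g ⊕ g ⊕ h)`-quasi-Poisson algebra (with `t = t_g¹ + t_g² + t_h`), then pulling the
action back along `(u,v) ↦ (u,u,v)` and setting
`{a,b}' = {a,b} + ½ m(t^{2,3}·(a⊗b − b⊗a))` makes `A` a `(g ⊕ h)`-quasi-Poisson
algebra: the fused bracket is skew, a biderivation, `(g ⊕ h)`-invariant, and satisfies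
the Jacobi identity twisted by `φ_{g⊕h}` for the diagonal action. -/
theorem statement_12
    {g h : Type*} [LieRing g] [LieAlgebra k g] [LieRing h] [LieAlgebra k h]
    (tg : g ⊗[k] g) (th : h ⊗[k] h)
    (htg_symm : TensorProduct.comm k g g tg = tg) (htg_inv : ∀ x : g, ⁅x, tg⁆ = 0)
    (hth_symm : TensorProduct.comm k h h th = th) (hth_inv : ∀ x : h, ⁅x, th⁆ = 0)
    {A : Type*} [CommRing A] [Algebra k A]
    (ρ : ((g × g) × h) →ₗ[k] Module.End k A)
    (hder : ∀ (p : (g × g) × h) (a b : A), ρ p (a * b) = ρ p a * b + a * ρ p b)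
    (hlie : ∀ p q : (g × g) × h, ρ ⁅p, q⁆ = ρ p * ρ q - ρ q * ρ p)
    (br : A →ₗ[k] A →ₗ[k] A)
    (hskew : ∀ a b, br a b = - br b a)
    (hbider : ∀ a b c, br a (b * c) = br a b * c + b * br a c)
    (hinvbr : ∀ (p : (g × g) × h) (a b : A),
        ρ p (br a b) = br (ρ p a) b + br a (ρ p b))
    -- the Jacobi identity twisted by `φ` for `t = t_g¹ + t_g² + t_h`
    (hjac : ∀ a₁ a₂ a₃ : A,
      br a₁ (br a₂ a₃) + br a₂ (br a₃ a₁) + br a₃ (br a₁ a₂) =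
        - tripleMul k A (threeLeg (k := k) ρ
            (cartanPhi k
              (TensorProduct.map (incl1 k g h) (incl1 k g h) tg
                + TensorProduct.map (incl2 k g h) (incl2 k g h) tg
                + TensorProduct.map (inclh k g h) (inclh k g h) th))
            (a₁ ⊗ₜ[k] (a₂ ⊗ₜ[k] a₃)))) :
    -- the fused bracket `{a,b}' = {a,b} + ½ m(t^{2,3}·(a⊗b − b⊗a))`
    ∀ br' : A → A → A,
      (∀ a b, br' a b = br a b + (2⁻¹ : k) •
          (LinearMap.mul' k A)
            (twoLegPair (k := k) (ρ ∘ₗ incl2 k g h) (ρ ∘ₗ incl1 k g h) tg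
              (a ⊗ₜ[k] b - b ⊗ₜ[k] a))) →
      -- skew-symmetry
      ((∀ a b, br' a b = - br' b a)
      -- biderivation
      ∧ (∀ a b c, br' a (b * c) = br' a b * c + b * br' a c)
      -- invariance under the pulled-back `(g ⊕ h)`-action
      ∧ (∀ (p : g × h) (a b : A),
          ρ (diagMor k g h p) (br' a b) =
            br' (ρ (diagMor k g h p) a) b + br' a (ρ (diagMor k g h p) b))
      -- Jacobi identity twisted by `φ_{g⊕h}` for the diagonal action
      ∧ (∀ a₁ a₂ a₃ : A,
          br' a₁ (br' a₂ a₃) + br' a₂ (br' a₃ a₁) + br' a₃ (br' a₁ a₂) =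
            - tripleMul k A (threeLeg (k := k) (ρ ∘ₗ diagMor k g h)
                (cartanPhi k
                  (TensorProduct.map (LinearMap.inl k g h) (LinearMap.inl k g h) tg
                    + TensorProduct.map (LinearMap.inr k g h) (LinearMap.inr k g h) th))
                (a₁ ⊗ₜ[k] (a₂ ⊗ₜ[k] a₃))))) := by
  intro br' hbr'
  obtain ⟨S, hS⟩ := TensorProduct.exists_finset tg
  obtain ⟨Sh, hSh⟩ := TensorProduct.exists_finset th
  set E1 : g →ₗ[k] Module.End k A := ρ ∘ₗ incl1 k g h with hE1def
  set E2 : g →ₗ[k] Module.End k A := ρ ∘ₗ incl2 k g h with hE2def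
  set Eh : h →ₗ[k] Module.End k A := ρ ∘ₗ inclh k g h with hEhdef
  have hder1 : ∀ (x : g) (a b : A), E1 x (a * b) = E1 x a * b + a * E1 x b :=
    fun x a b => hder _ a b
  have hder2 : ∀ (x : g) (a b : A), E2 x (a * b) = E2 x a * b + a * E2 x b :=
    fun x a b => hder _ a b
  have hlieE : ∀ (P Q : (g × g) × h) (a : A), ρ ⁅P, Q⁆ a = ρ P (ρ Q a) - ρ Q (ρ P a) := by
    intro P Q a
    rw [hlie P Q]
    simp [Module.End.mul_apply]
  have hlie1E : ∀ (x y : g) (a : A), E1 ⁅x, y⁆ a = E1 x (E1 y a) - E1 y (E1 x a) := by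
    intro x y a
    calc E1 ⁅x, y⁆ a = ρ ⁅incl1 k g h x, incl1 k g h y⁆ a := by
          rw [lie_incl1]; rfl
      _ = ρ (incl1 k g h x) (ρ (incl1 k g h y) a)
            - ρ (incl1 k g h y) (ρ (incl1 k g h x) a) := hlieE _ _ a
      _ = E1 x (E1 y a) - E1 y (E1 x a) := rfl
  have hlie2E : ∀ (x y : g) (a : A), E2 ⁅x, y⁆ a = E2 x (E2 y a) - E2 y (E2 x a) := by
    intro x y a
    calc E2 ⁅x, y⁆ a = ρ ⁅incl2 k g h x, incl2 k g h y⁆ a := by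
          rw [lie_incl2]; rfl
      _ = ρ (incl2 k g h x) (ρ (incl2 k g h y) a)
            - ρ (incl2 k g h y) (ρ (incl2 k g h x) a) := hlieE _ _ a
      _ = E2 x (E2 y a) - E2 y (E2 x a) := rfl
  have hcommE : ∀ (x y : g) (a : A), E1 x (E2 y a) = E2 y (E1 x a) := by
    intro x y a
    have h0 : (0 : A) = E1 x (E2 y a) - E2 y (E1 x a) := by
      have := hlieE (incl1 k g h x) (incl2 k g h y) a
      rw [lie_incl12, map_zero] at this
      exact this
    linear_combination -h0
  have hinv1 : ∀ (x : g) (a b : A), E1 x (br a b) = br (E1 x a) b + br a (E1 x b) :=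
    fun x a b => hinvbr _ a b
  have hinv2 : ∀ (x : g) (a b : A), E2 x (br a b) = br (E2 x a) b + br a (E2 x b) :=
    fun x a b => hinvbr _ a b
  have hcorr : ∀ a b : A,
      (LinearMap.mul' k A) (twoLegPair (k := k) E2 E1 tg (a ⊗ₜ[k] b - b ⊗ₜ[k] a))
        = corrS (k := k) E1 E2 S a b := by
    intro a b
    rw [hS]
    simp only [map_sum, map_sub, LinearMap.sum_apply, twoLegPair_tmul, LinearMap.mul'_apply,
      Finset.sum_sub_distrib]
    unfold corrS
    rw [Finset.sum_sub_distrib]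
  have hbr'eq : ∀ a b : A, br' a b = br a b + (2⁻¹ : k) • corrS (k := k) E1 E2 S a b := by
    intro a b
    rw [hbr' a b, hcorr a b]
  refine ⟨?_, ?_, ?_, ?_⟩
  · -- skew
    intro a b
    rw [hbr'eq a b, hbr'eq b a, hskew a b, corrS_skew (k := k) E1 E2 a b, smul_neg]
    abel
  · -- biderivation
    intro a b c
    rw [hbr'eq a (b * c), hbr'eq a b, hbr'eq a c, hbider a b c,
      corrS_bider (k := k) E1 E2 hder1 hder2 a b c, smul_add, add_mul, mul_add,
      smul_mul_assoc, mul_smul_comm]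
    abel
  · -- invariance
    intro pp a b
    have hDder : ∀ a b : A, ρ (diagMor k g h pp) (a * b)
        = ρ (diagMor k g h pp) a * b + a * ρ (diagMor k g h pp) b := fun a b => hder _ a b
    have hc1 : ∀ (x : g) (a : A), ρ (diagMor k g h pp) (E1 x a)
        = E1 x (ρ (diagMor k g h pp) a) + E1 ⁅pp.1, x⁆ a := by
      intro x a
      have hb := hlieE (diagMor k g h pp) (incl1 k g h x) a
      rw [diagMor_lie_incl1] at hb
      have hb' : E1 ⁅pp.1, x⁆ a
          = ρ (diagMor k g h pp) (E1 x a) - E1 x (ρ (diagMor k g h pp) a) := hb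
      linear_combination -hb'
    have hc2 : ∀ (x : g) (a : A), ρ (diagMor k g h pp) (E2 x a)
        = E2 x (ρ (diagMor k g h pp) a) + E2 ⁅pp.1, x⁆ a := by
      intro x a
      have hb := hlieE (diagMor k g h pp) (incl2 k g h x) a
      rw [diagMor_lie_incl2] at hb
      have hb' : E2 ⁅pp.1, x⁆ a
          = ρ (diagMor k g h pp) (E2 x a) - E2 x (ρ (diagMor k g h pp) a) := hb
      linear_combination -hb'
    rw [hbr'eq a b, hbr'eq (ρ (diagMor k g h pp) a) b, hbr'eq a (ρ (diagMor k g h pp) b),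
      map_add, map_smul, hinvbr (diagMor k g h pp) a b,
      corrS_invariance (k := k) E1 E2 htg_inv hS (ρ (diagMor k g h pp)) pp.1 hDder hc1 hc2 a b,
      smul_add]
    abel
  · -- Jacobi
    intro a₁ a₂ a₃
    have hcyc : ∀ a b c : A, br' a (br' b c)
        = br a (br b c) + (2⁻¹ : k) • br a (corrS (k := k) E1 E2 S b c)
          + (2⁻¹ : k) • corrS (k := k) E1 E2 S a (br b c)
          + ((2⁻¹ : k) * 2⁻¹) • corrS (k := k) E1 E2 S a (corrS (k := k) E1 E2 S b c) := by
      intro a b c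
      rw [hbr'eq b c]
      rw [hbr'eq a (br b c + (2⁻¹ : k) • corrS (k := k) E1 E2 S b c)]
      rw [map_add (br a), map_smul (br a)]
      rw [corrS_add_right (k := k) E1 E2, corrS_smul_right (k := k) E1 E2]
      rw [smul_add (2⁻¹ : k), smul_smul]
      abel
    have hmix := mixed_vanish (k := k) (S := S) E1 E2 br hskew hbider hinv1 hinv2 a₁ a₂ a₃
    have hcore := core_jacobi (k := k) E1 E2 htg_symm htg_inv hS hder1 hder2 hcommE
      hlie1E hlie2E a₁ a₂ a₃
    -- evaluation of the two trivector terms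
    have hm1 : TensorProduct.map (incl1 k g h) (incl1 k g h) tg
        = ∑ p ∈ S, incl1 k g h p.1 ⊗ₜ[k] incl1 k g h p.2 := by
      rw [hS, map_sum]
      simp only [TensorProduct.map_tmul]
    have hm2 : TensorProduct.map (incl2 k g h) (incl2 k g h) tg
        = ∑ p ∈ S, incl2 k g h p.1 ⊗ₜ[k] incl2 k g h p.2 := by
      rw [hS, map_sum]
      simp only [TensorProduct.map_tmul]
    have hmh : TensorProduct.map (inclh k g h) (inclh k g h) th
        = ∑ p ∈ Sh, inclh k g h p.1 ⊗ₜ[k] inclh k g h p.2 := by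
      rw [hSh, map_sum]
      simp only [TensorProduct.map_tmul]
    have hminl : TensorProduct.map (LinearMap.inl k g h) (LinearMap.inl k g h) tg
        = ∑ p ∈ S, LinearMap.inl k g h p.1 ⊗ₜ[k] LinearMap.inl k g h p.2 := by
      rw [hS, map_sum]
      simp only [TensorProduct.map_tmul]
    have hminr : TensorProduct.map (LinearMap.inr k g h) (LinearMap.inr k g h) th
        = ∑ p ∈ Sh, LinearMap.inr k g h p.1 ⊗ₜ[k] LinearMap.inr k g h p.2 := by
      rw [hSh, map_sum]
      simp only [TensorProduct.map_tmul]
    have hjacEval : br a₁ (br a₂ a₃) + br a₂ (br a₃ a₁) + br a₃ (br a₁ a₂)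
        = -((4 : k)⁻¹ • ((∑ p ∈ S, ∑ q ∈ S, E1 p.1 a₁ * (E1 ⁅p.2, q.1⁆ a₂ * E1 q.2 a₃))
            + (∑ p ∈ S, ∑ q ∈ S, E2 p.1 a₁ * (E2 ⁅p.2, q.1⁆ a₂ * E2 q.2 a₃))
            + ∑ p ∈ Sh, ∑ q ∈ Sh, Eh p.1 a₁ * (Eh ⁅p.2, q.1⁆ a₂ * Eh q.2 a₃))) := by
      have z12 : tComm2 (k := k) (∑ p ∈ S, incl1 k g h p.1 ⊗ₜ[k] incl1 k g h p.2)
          (∑ p ∈ S, incl2 k g h p.1 ⊗ₜ[k] incl2 k g h p.2) = 0 :=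
        tComm2_cross_zero _ _ _ _ _ _ (fun p q => lie_incl12 p.2 q.1)
      have z1h : tComm2 (k := k) (∑ p ∈ S, incl1 k g h p.1 ⊗ₜ[k] incl1 k g h p.2)
          (∑ p ∈ Sh, inclh k g h p.1 ⊗ₜ[k] inclh k g h p.2) = 0 :=
        tComm2_cross_zero _ _ _ _ _ _ (fun p q => lie_incl1h p.2 q.1)
      have z21 : tComm2 (k := k) (∑ p ∈ S, incl2 k g h p.1 ⊗ₜ[k] incl2 k g h p.2)
          (∑ p ∈ S, incl1 k g h p.1 ⊗ₜ[k] incl1 k g h p.2) = 0 :=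
        tComm2_cross_zero _ _ _ _ _ _ (fun p q => lie_incl21 p.2 q.1)
      have z2h : tComm2 (k := k) (∑ p ∈ S, incl2 k g h p.1 ⊗ₜ[k] incl2 k g h p.2)
          (∑ p ∈ Sh, inclh k g h p.1 ⊗ₜ[k] inclh k g h p.2) = 0 :=
        tComm2_cross_zero _ _ _ _ _ _ (fun p q => lie_incl2h p.2 q.1)
      have zh1 : tComm2 (k := k) (∑ p ∈ Sh, inclh k g h p.1 ⊗ₜ[k] inclh k g h p.2)
          (∑ p ∈ S, incl1 k g h p.1 ⊗ₜ[k] incl1 k g h p.2) = 0 :=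
        tComm2_cross_zero _ _ _ _ _ _ (fun p q => lie_inclh1 p.2 q.1)
      have zh2 : tComm2 (k := k) (∑ p ∈ Sh, inclh k g h p.1 ⊗ₜ[k] inclh k g h p.2)
          (∑ p ∈ S, incl2 k g h p.1 ⊗ₜ[k] incl2 k g h p.2) = 0 :=
        tComm2_cross_zero _ _ _ _ _ _ (fun p q => lie_inclh2 p.2 q.1)
      have d1 : tComm2 (k := k) (∑ p ∈ S, incl1 k g h p.1 ⊗ₜ[k] incl1 k g h p.2)
          (∑ p ∈ S, incl1 k g h p.1 ⊗ₜ[k] incl1 k g h p.2)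
          = ∑ p ∈ S, ∑ q ∈ S, incl1 k g h p.1
              ⊗ₜ[k] (⁅incl1 k g h p.2, incl1 k g h q.1⁆ ⊗ₜ[k] incl1 k g h q.2) :=
        tComm2_sum_eval _ _ _ _ _ _
      have d2 : tComm2 (k := k) (∑ p ∈ S, incl2 k g h p.1 ⊗ₜ[k] incl2 k g h p.2)
          (∑ p ∈ S, incl2 k g h p.1 ⊗ₜ[k] incl2 k g h p.2)
          = ∑ p ∈ S, ∑ q ∈ S, incl2 k g h p.1
              ⊗ₜ[k] (⁅incl2 k g h p.2, incl2 k g h q.1⁆ ⊗ₜ[k] incl2 k g h q.2) :=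
        tComm2_sum_eval _ _ _ _ _ _
      have dh : tComm2 (k := k) (∑ p ∈ Sh, inclh k g h p.1 ⊗ₜ[k] inclh k g h p.2)
          (∑ p ∈ Sh, inclh k g h p.1 ⊗ₜ[k] inclh k g h p.2)
          = ∑ p ∈ Sh, ∑ q ∈ Sh, inclh k g h p.1
              ⊗ₜ[k] (⁅inclh k g h p.2, inclh k g h q.1⁆ ⊗ₜ[k] inclh k g h q.2) :=
        tComm2_sum_eval _ _ _ _ _ _
      have t1 : tripleMul k A (threeLeg (k := k) ρ
            (∑ p ∈ S, ∑ q ∈ S, incl1 k g h p.1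
              ⊗ₜ[k] (⁅incl1 k g h p.2, incl1 k g h q.1⁆ ⊗ₜ[k] incl1 k g h q.2))
            (a₁ ⊗ₜ[k] (a₂ ⊗ₜ[k] a₃)))
          = ∑ p ∈ S, ∑ q ∈ S, ρ (incl1 k g h p.1) a₁
              * (ρ ⁅incl1 k g h p.2, incl1 k g h q.1⁆ a₂ * ρ (incl1 k g h q.2) a₃) :=
        tripleEval ρ _ _ _ _ _ _ a₁ a₂ a₃
      have t2 : tripleMul k A (threeLeg (k := k) ρ
            (∑ p ∈ S, ∑ q ∈ S, incl2 k g h p.1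
              ⊗ₜ[k] (⁅incl2 k g h p.2, incl2 k g h q.1⁆ ⊗ₜ[k] incl2 k g h q.2))
            (a₁ ⊗ₜ[k] (a₂ ⊗ₜ[k] a₃)))
          = ∑ p ∈ S, ∑ q ∈ S, ρ (incl2 k g h p.1) a₁
              * (ρ ⁅incl2 k g h p.2, incl2 k g h q.1⁆ a₂ * ρ (incl2 k g h q.2) a₃) :=
        tripleEval ρ _ _ _ _ _ _ a₁ a₂ a₃
      have t3 : tripleMul k A (threeLeg (k := k) ρ
            (∑ p ∈ Sh, ∑ q ∈ Sh, inclh k g h p.1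
              ⊗ₜ[k] (⁅inclh k g h p.2, inclh k g h q.1⁆ ⊗ₜ[k] inclh k g h q.2))
            (a₁ ⊗ₜ[k] (a₂ ⊗ₜ[k] a₃)))
          = ∑ p ∈ Sh, ∑ q ∈ Sh, ρ (inclh k g h p.1) a₁
              * (ρ ⁅inclh k g h p.2, inclh k g h q.1⁆ a₂ * ρ (inclh k g h q.2) a₃) :=
        tripleEval ρ _ _ _ _ _ _ a₁ a₂ a₃
      rw [hjac a₁ a₂ a₃, cartanPhi, map_smul, LinearMap.smul_apply, map_smul]
      congr 2
      rw [tCommutator_eq_tComm2, hm1, hm2, hmh, tComm2_three, z12, z1h, z21, z2h, zh1, zh2,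
        d1, d2, dh]
      simp only [add_zero, zero_add]
      rw [map_add, map_add, LinearMap.add_apply, LinearMap.add_apply, map_add, map_add,
        t1, t2, t3]
      congr 1
      · congr 1
        · refine Finset.sum_congr rfl fun p _ => Finset.sum_congr rfl fun q _ => ?_
          rw [lie_incl1]
          rfl
        · refine Finset.sum_congr rfl fun p _ => Finset.sum_congr rfl fun q _ => ?_
          rw [lie_incl2]
          rfl
      · refine Finset.sum_congr rfl fun p _ => Finset.sum_congr rfl fun q _ => ?_
        rw [lie_inclh]
        rfl
    have hρd1 : ∀ (x : g) (a : A), (ρ ∘ₗ diagMor k g h) (LinearMap.inl k g h x) a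
        = E1 x a + E2 x a := by
      intro x a
      show ρ (diagMor k g h (LinearMap.inl k g h x)) a = _
      rw [diagMor_inl, map_add]
      rfl
    have hρdh : ∀ (v : h) (a : A), (ρ ∘ₗ diagMor k g h) (LinearMap.inr k g h v) a
        = Eh v a := by
      intro v a
      show ρ (diagMor k g h (LinearMap.inr k g h v)) a = _
      rw [diagMor_inr]
      rfl
    have hgoal : tripleMul k A (threeLeg (k := k) (ρ ∘ₗ diagMor k g h)
          (cartanPhi k
            (TensorProduct.map (LinearMap.inl k g h) (LinearMap.inl k g h) tg
              + TensorProduct.map (LinearMap.inr k g h) (LinearMap.inr k g h) th))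
          (a₁ ⊗ₜ[k] (a₂ ⊗ₜ[k] a₃)))
        = (4 : k)⁻¹ • ((∑ p ∈ S, ∑ q ∈ S,
              (E1 p.1 a₁ + E2 p.1 a₁)
                * ((E1 ⁅p.2, q.1⁆ a₂ + E2 ⁅p.2, q.1⁆ a₂) * (E1 q.2 a₃ + E2 q.2 a₃)))
            + ∑ p ∈ Sh, ∑ q ∈ Sh, Eh p.1 a₁ * (Eh ⁅p.2, q.1⁆ a₂ * Eh q.2 a₃)) := by
      have zlr : tComm2 (k := k) (∑ p ∈ S, LinearMap.inl k g h p.1 ⊗ₜ[k] LinearMap.inl k g h p.2)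
          (∑ p ∈ Sh, LinearMap.inr k g h p.1 ⊗ₜ[k] LinearMap.inr k g h p.2) = 0 :=
        tComm2_cross_zero _ _ _ _ _ _ (fun p q => lie_inl_inr p.2 q.1)
      have zrl : tComm2 (k := k) (∑ p ∈ Sh, LinearMap.inr k g h p.1 ⊗ₜ[k] LinearMap.inr k g h p.2)
          (∑ p ∈ S, LinearMap.inl k g h p.1 ⊗ₜ[k] LinearMap.inl k g h p.2) = 0 :=
        tComm2_cross_zero _ _ _ _ _ _ (fun p q => lie_inr_inl p.2 q.1)
      have dl : tComm2 (k := k) (∑ p ∈ S, LinearMap.inl k g h p.1 ⊗ₜ[k] LinearMap.inl k g h p.2)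
          (∑ p ∈ S, LinearMap.inl k g h p.1 ⊗ₜ[k] LinearMap.inl k g h p.2)
          = ∑ p ∈ S, ∑ q ∈ S, LinearMap.inl k g h p.1
              ⊗ₜ[k] (⁅LinearMap.inl k g h p.2, LinearMap.inl k g h q.1⁆ ⊗ₜ[k] LinearMap.inl k g h q.2) :=
        tComm2_sum_eval _ _ _ _ _ _
      have dr : tComm2 (k := k) (∑ p ∈ Sh, LinearMap.inr k g h p.1 ⊗ₜ[k] LinearMap.inr k g h p.2)
          (∑ p ∈ Sh, LinearMap.inr k g h p.1 ⊗ₜ[k] LinearMap.inr k g h p.2)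
          = ∑ p ∈ Sh, ∑ q ∈ Sh, LinearMap.inr k g h p.1
              ⊗ₜ[k] (⁅LinearMap.inr k g h p.2, LinearMap.inr k g h q.1⁆ ⊗ₜ[k] LinearMap.inr k g h q.2) :=
        tComm2_sum_eval _ _ _ _ _ _
      have tl : tripleMul k A (threeLeg (k := k) (ρ ∘ₗ diagMor k g h)
            (∑ p ∈ S, ∑ q ∈ S, LinearMap.inl k g h p.1
              ⊗ₜ[k] (⁅LinearMap.inl k g h p.2, LinearMap.inl k g h q.1⁆ ⊗ₜ[k] LinearMap.inl k g h q.2))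
            (a₁ ⊗ₜ[k] (a₂ ⊗ₜ[k] a₃)))
          = ∑ p ∈ S, ∑ q ∈ S, (ρ ∘ₗ diagMor k g h) (LinearMap.inl k g h p.1) a₁
              * ((ρ ∘ₗ diagMor k g h) ⁅LinearMap.inl k g h p.2, LinearMap.inl k g h q.1⁆ a₂
                * (ρ ∘ₗ diagMor k g h) (LinearMap.inl k g h q.2) a₃) :=
        tripleEval _ _ _ _ _ _ _ a₁ a₂ a₃
      have tr : tripleMul k A (threeLeg (k := k) (ρ ∘ₗ diagMor k g h)
            (∑ p ∈ Sh, ∑ q ∈ Sh, LinearMap.inr k g h p.1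
              ⊗ₜ[k] (⁅LinearMap.inr k g h p.2, LinearMap.inr k g h q.1⁆ ⊗ₜ[k] LinearMap.inr k g h q.2))
            (a₁ ⊗ₜ[k] (a₂ ⊗ₜ[k] a₃)))
          = ∑ p ∈ Sh, ∑ q ∈ Sh, (ρ ∘ₗ diagMor k g h) (LinearMap.inr k g h p.1) a₁
              * ((ρ ∘ₗ diagMor k g h) ⁅LinearMap.inr k g h p.2, LinearMap.inr k g h q.1⁆ a₂
                * (ρ ∘ₗ diagMor k g h) (LinearMap.inr k g h q.2) a₃) :=
        tripleEval _ _ _ _ _ _ _ a₁ a₂ a₃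
      rw [cartanPhi, map_smul, LinearMap.smul_apply, map_smul]
      congr 1
      rw [tCommutator_eq_tComm2, hminl, hminr, tComm2_add_add, zlr, zrl, dl, dr]
      simp only [add_zero, zero_add]
      rw [map_add, LinearMap.add_apply, map_add, tl, tr]
      congr 1
      · refine Finset.sum_congr rfl fun p _ => Finset.sum_congr rfl fun q _ => ?_
        rw [lie_inl, hρd1, hρd1, hρd1]
      · refine Finset.sum_congr rfl fun p _ => Finset.sum_congr rfl fun q _ => ?_
        rw [lie_inr, hρdh, hρdh, hρdh]
    have hJd : (∑ p ∈ S, ∑ q ∈ S,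
          (E1 p.1 a₁ + E2 p.1 a₁)
            * ((E1 ⁅p.2, q.1⁆ a₂ + E2 ⁅p.2, q.1⁆ a₂) * (E1 q.2 a₃ + E2 q.2 a₃)))
        = (∑ p ∈ S, ∑ q ∈ S, E1 p.1 a₁ * (E1 ⁅p.2, q.1⁆ a₂ * E1 q.2 a₃))
          + (∑ p ∈ S, ∑ q ∈ S, E2 p.1 a₁ * (E2 ⁅p.2, q.1⁆ a₂ * E2 q.2 a₃))
          + ∑ p ∈ S, ∑ q ∈ S,
            (E2 p.1 a₁ * (E1 ⁅p.2, q.1⁆ a₂ * E1 q.2 a₃)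
             + E1 p.1 a₁ * (E2 ⁅p.2, q.1⁆ a₂ * E1 q.2 a₃)
             + E1 p.1 a₁ * (E1 ⁅p.2, q.1⁆ a₂ * E2 q.2 a₃)
             + E1 p.1 a₁ * (E2 ⁅p.2, q.1⁆ a₂ * E2 q.2 a₃)
             + E2 p.1 a₁ * (E1 ⁅p.2, q.1⁆ a₂ * E2 q.2 a₃)
             + E2 p.1 a₁ * (E2 ⁅p.2, q.1⁆ a₂ * E1 q.2 a₃)) := by
      simp only [← Finset.sum_add_distrib]
      exact Finset.sum_congr rfl fun p _ => Finset.sum_congr rfl fun q _ => by ring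
    calc br' a₁ (br' a₂ a₃) + br' a₂ (br' a₃ a₁) + br' a₃ (br' a₁ a₂)
        = (br a₁ (br a₂ a₃) + br a₂ (br a₃ a₁) + br a₃ (br a₁ a₂))
          + (2⁻¹ : k) • ((br a₁ (corrS (k := k) E1 E2 S a₂ a₃)
              + corrS (k := k) E1 E2 S a₁ (br a₂ a₃))
            + (br a₂ (corrS (k := k) E1 E2 S a₃ a₁)
              + corrS (k := k) E1 E2 S a₂ (br a₃ a₁))
            + (br a₃ (corrS (k := k) E1 E2 S a₁ a₂)
              + corrS (k := k) E1 E2 S a₃ (br a₁ a₂)))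
          + ((2⁻¹ : k) * 2⁻¹) • (corrS (k := k) E1 E2 S a₁ (corrS (k := k) E1 E2 S a₂ a₃)
            + corrS (k := k) E1 E2 S a₂ (corrS (k := k) E1 E2 S a₃ a₁)
            + corrS (k := k) E1 E2 S a₃ (corrS (k := k) E1 E2 S a₁ a₂)) := by
          rw [hcyc a₁ a₂ a₃, hcyc a₂ a₃ a₁, hcyc a₃ a₁ a₂]
          simp only [smul_add]
          abel
      _ = - tripleMul k A (threeLeg (k := k) (ρ ∘ₗ diagMor k g h)
            (cartanPhi k
              (TensorProduct.map (LinearMap.inl k g h) (LinearMap.inl k g h) tg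
                + TensorProduct.map (LinearMap.inr k g h) (LinearMap.inr k g h) th))
            (a₁ ⊗ₜ[k] (a₂ ⊗ₜ[k] a₃))) := by
          rw [hjacEval, hmix, hcore, hgoal, hJd, smul_zero, add_zero]
          have h4 : ((2⁻¹ : k) * 2⁻¹) = (4 : k)⁻¹ := by norm_num
          rw [h4]
          module
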